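/- Let Z = {+B, −B}, and let P₀ and P₁ be the point masses P₀(+B) = 1 and P₁(−B) = 1. For every (ε,δ)-user-level differentially private algorithm A : ({+B,−B}^m)^n → [0,1], if δ < 1/(2·n·e^{n·ε}), then, letting S consist of n users each holding m i.i.d. samples from P_ϑ for ϑ ∈ {0,1}, one has max_{ϑ∈{0,1}} E[(A(S) − ϑ)²] ≥ 1/(8·(1 + e^{n·ε})); in particular the worst-case risk is Ω(e^{−n·ε}) regardless of m. -/

import Mathlib

open MeasureTheory Real

noncomputable section

lemma pi_dirac' {ι : Type*} [Fintype ι] {α : ι → Type*} [∀ i, MeasurableSpace (α i)]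
    (c : ∀ i, α i) :
    Measure.pi (fun i => Measure.dirac (c i)) = Measure.dirac c := by
  refine Measure.pi_eq fun s hs => ?_
  rw [Measure.dirac_apply' _ (MeasurableSet.univ_pi hs)]
  by_cases h : ∀ i, c i ∈ s i
  · rw [Set.indicator_of_mem (Set.mem_univ_pi.mpr h)]
    symm
    refine Finset.prod_eq_one fun i _ => ?_
    rw [Measure.dirac_apply' _ (hs i), Set.indicator_of_mem (h i)]
    rfl
  · push_neg at h
    obtain ⟨i, hi⟩ := h
    rw [Set.indicator_of_notMem (by simpa [Set.mem_univ_pi] using ⟨i, hi⟩)]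
    exact (Finset.prod_eq_zero (Finset.mem_univ i) (by
      rw [Measure.dirac_apply' _ (hs i), Set.indicator_of_notMem hi])).symm

lemma dirac_bind'' {α β : Type*} [MeasurableSpace α] [MeasurableSpace β]
    [MeasurableSingletonClass α] (f : α → Measure β) (a : α) :
    (Measure.dirac a).bind f = f a := by
  have hae : f =ᵐ[Measure.dirac a] fun _ => f a := by
    rw [Filter.EventuallyEq, MeasureTheory.ae_dirac_eq]
    exact Filter.eventually_pure.mpr rfl
  rw [Measure.bind, Measure.map_congr hae, Measure.map_const]
  simp [Measure.join_dirac]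

lemma risk_lower {μ : Measure ℝ} [IsProbabilityMeasure μ] (hμ : μ (Set.Icc (0:ℝ) 1) = 1)
    (c : ℝ) (hc : ∀ x ∈ Set.Icc (0:ℝ) 1, (x - c)^2 ≤ 1)
    (T : Set ℝ) (hT : MeasurableSet T) (hTc : ∀ x ∈ T, (1:ℝ)/4 ≤ (x - c)^2) :
    (μ T).toReal / 4 ≤ ∫ x, (x - c)^2 ∂μ := by
  have hae : ∀ᵐ x ∂μ, x ∈ Set.Icc (0:ℝ) 1 := by
    rw [ae_iff]
    have h2 := measure_compl (μ := μ) (s := Set.Icc (0:ℝ) 1) measurableSet_Icc (measure_ne_top μ _)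
    rw [hμ, measure_univ, tsub_self] at h2
    simpa [Set.compl_def] using h2
  have hint : Integrable (fun x => (x - c)^2) μ := by
    refine Integrable.mono' (integrable_const 1) ?_ ?_
    · exact ((continuous_id.sub continuous_const).pow 2).aestronglyMeasurable
    · filter_upwards [hae] with x hx
      rw [Real.norm_eq_abs, abs_of_nonneg (by positivity)]
      exact hc x hx
  have hind : Integrable (T.indicator fun _ => (1:ℝ)/4) μ :=
    (integrable_const _).indicator hT
  have hle : ∀ x, T.indicator (fun _ => (1:ℝ)/4) x ≤ (x - c)^2 := by
    intro x
    by_cases hx : x ∈ T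
    · rw [Set.indicator_of_mem hx]; exact hTc x hx
    · rw [Set.indicator_of_notMem hx]; positivity
  calc (μ T).toReal / 4 = ∫ x, T.indicator (fun _ => (1:ℝ)/4) x ∂μ := by
        rw [integral_indicator_const _ hT, smul_eq_mul, measureReal_def]; ring
    _ ≤ ∫ x, (x - c)^2 ∂μ := integral_mono hind hint hle

/-- `(ε,δ)`-user-level differential privacy: the dataset space is `(Z^m)^n` with entries in
the data domain `D`; two datasets are neighboring if they differ in at most one user's
entire block of `m` samples. -/
def UserDP {Z Ω : Type*} [MeasurableSpace Ω] (n m : ℕ) (ε δ : ℝ) (D : Set Z)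
    (A : (Fin n → Fin m → Z) → Measure Ω) : Prop :=
  ∀ s s' : Fin n → Fin m → Z,
    (∀ u j, s u j ∈ D) → (∀ u j, s' u j ∈ D) →
    (∃ u₀, ∀ u, u ≠ u₀ → s u = s' u) →
    ∀ O : Set Ω, MeasurableSet O →
      A s O ≤ ENNReal.ofReal (Real.exp ε) * A s' O + ENNReal.ofReal δ

/-- Theorem: limit of learning with a fixed number of users.
Let `Z = {+B, −B}` with `P₀` the point mass at `+B` (labelled `ϑ = 0`) and `P₁` the point
mass at `−B` (labelled `ϑ = 1`). For every `(ε,δ)`-user-level DP algorithm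
`A : ({+B,−B}^m)^n → [0,1]` with `δ < 1/(2n e^{nε})`,
`max_{ϑ∈{0,1}} E[(A(S) − ϑ)²] ≥ 1/(8(1 + e^{nε}))`, regardless of `m`. -/
theorem limit_of_learning_fixed_users
    (n m : ℕ) (hn : 0 < n) (hm : 0 < m)
    (B ε δ : ℝ) (hB : 0 < B) (hε : 0 < ε) (hδ0 : 0 ≤ δ)
    (hδ : δ < 1 / (2 * n * Real.exp (n * ε)))
    (A : (Fin n → Fin m → ℝ) → Measure ℝ)
    (hprob : ∀ s, IsProbabilityMeasure (A s))
    -- A takes values in [0,1]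
    (hrange : ∀ s, A s (Set.Icc (0 : ℝ) 1) = 1)
    (hDP : UserDP n m ε δ ({B, -B} : Set ℝ) A) :
    1 / (8 * (1 + Real.exp (n * ε))) ≤
      max
        (∫ x, (x - 0) ^ 2
          ∂((Measure.pi fun _ : Fin n =>
              Measure.pi fun _ : Fin m => Measure.dirac (B : ℝ)).bind A))
        (∫ x, (x - 1) ^ 2
          ∂((Measure.pi fun _ : Fin n =>
              Measure.pi fun _ : Fin m => Measure.dirac (-B : ℝ)).bind A)) := by
  haveI := hprob
  set E : ℝ := Real.exp (n * ε) with hE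
  have hE1 : (1:ℝ) ≤ E := Real.one_le_exp (by positivity)
  have hEpos : (0:ℝ) < E := lt_of_lt_of_le one_pos hE1
  set t : ℕ → (Fin n → Fin m → ℝ) := fun k u _ => if (u : ℕ) < k then B else -B with ht
  have ht0 : t 0 = fun _ _ => -B := by funext u j; simp [ht]
  have htn : t n = fun _ _ => B := by funext u j; simp [ht, u.isLt]
  -- reduce the binds
  have hb0 : (Measure.pi fun _ : Fin n =>
      Measure.pi fun _ : Fin m => Measure.dirac (B : ℝ)).bind A = A (t n) := by
    have h1 : (Measure.pi fun _ : Fin m => Measure.dirac (B : ℝ))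
        = Measure.dirac (fun _ : Fin m => (B:ℝ)) := pi_dirac' _
    rw [htn, h1, pi_dirac' (fun _ : Fin n => (fun _ : Fin m => (B:ℝ))), dirac_bind'']
  have hb1 : (Measure.pi fun _ : Fin n =>
      Measure.pi fun _ : Fin m => Measure.dirac (-B : ℝ)).bind A = A (t 0) := by
    have h1 : (Measure.pi fun _ : Fin m => Measure.dirac (-B : ℝ))
        = Measure.dirac (fun _ : Fin m => (-B:ℝ)) := pi_dirac' _
    rw [ht0, h1, pi_dirac' (fun _ : Fin n => (fun _ : Fin m => (-B:ℝ))), dirac_bind'']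
  set O : Set ℝ := Set.Ici (1/2 : ℝ) with hOdef
  have hOm : MeasurableSet O := measurableSet_Ici
  have hg0 : ∀ k, (0:ℝ) ≤ (A (t k) O).toReal := fun k => ENNReal.toReal_nonneg
  have hmem : ∀ k u j, t k u j ∈ ({B, -B} : Set ℝ) := by
    intro k u j
    by_cases h : (u:ℕ) < k <;> simp [ht, h]
  -- one DP step, in real numbers
  have hstep : ∀ k, k < n →
      (A (t k) O).toReal ≤ Real.exp ε * (A (t (k+1)) O).toReal + δ := by
    intro k hk
    have hnb : ∃ u₀, ∀ u, u ≠ u₀ → t k u = t (k+1) u := by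
      refine ⟨⟨k, hk⟩, fun u hu => ?_⟩
      funext j
      have huk : (u:ℕ) ≠ k := fun h => hu (Fin.ext h)
      simp only [ht]
      by_cases h : (u:ℕ) < k
      · simp [h, Nat.lt_succ_of_lt h]
      · have h2 : ¬ (u:ℕ) < k + 1 := by omega
        simp [h, h2]
    have hdp := hDP (t k) (t (k+1)) (hmem k) (hmem (k+1)) hnb O hOm
    have hne1 : ENNReal.ofReal (Real.exp ε) * A (t (k+1)) O ≠ ⊤ :=
      ENNReal.mul_ne_top ENNReal.ofReal_ne_top (measure_ne_top _ _)
    have hfin : ENNReal.ofReal (Real.exp ε) * A (t (k+1)) O + ENNReal.ofReal δ ≠ ⊤ :=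
      ENNReal.add_ne_top.mpr ⟨hne1, ENNReal.ofReal_ne_top⟩
    have h := ENNReal.toReal_mono hfin hdp
    rwa [ENNReal.toReal_add hne1 ENNReal.ofReal_ne_top, ENNReal.toReal_mul,
      ENNReal.toReal_ofReal (Real.exp_pos ε).le, ENNReal.toReal_ofReal hδ0] at h
  -- group privacy
  have hgroup : ∀ k, k ≤ n →
      (A (t 0) O).toReal ≤ Real.exp ((k:ℝ) * ε) * (A (t k) O).toReal
        + (k:ℝ) * Real.exp ((k:ℝ) * ε) * δ := by
    intro k
    induction k with
    | zero => intro _; simp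
    | succ k ih =>
      intro hk1
      have hk : k < n := hk1
      have h1 := ih hk.le
      have h2 := hstep k hk
      have hexp : Real.exp ((k:ℝ) * ε) ≤ Real.exp (((k:ℝ)+1) * ε) :=
        Real.exp_le_exp.mpr (by nlinarith [hε.le])
      have hmul : Real.exp ((k:ℝ) * ε) * Real.exp ε = Real.exp (((k:ℝ)+1) * ε) := by
        rw [← Real.exp_add]; ring_nf
      have hpos := Real.exp_pos ((k:ℝ) * ε)
      push_cast
      nlinarith [hg0 (k+1), hg0 k, mul_le_mul_of_nonneg_left h2 hpos.le,
        mul_le_mul_of_nonneg_left hexp (mul_nonneg (Nat.cast_nonneg k) hδ0)]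
  set p : ℝ := (A (t n) O).toReal with hp_def
  set q : ℝ := (A (t 0) O).toReal with hq_def
  have hq : q ≤ E * p + (n:ℝ) * E * δ := by
    have := hgroup n le_rfl
    simpa [← hE] using this
  have hnEδ : (n:ℝ) * E * δ < 1/2 := by
    have h2 : (0:ℝ) < 2 * n * E := by positivity
    rw [lt_div_iff₀ h2] at hδ
    nlinarith
  -- risk bounds
  have hr0 : p / 4 ≤ ∫ x, (x - 0)^2 ∂(A (t n)) := by
    refine risk_lower (hrange _) 0 (fun x hx => by nlinarith [hx.1, hx.2]) O hOm ?_
    intro x hx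
    have : (1:ℝ)/2 ≤ x := hx
    nlinarith
  have h1q : (A (t 0) (Set.Iio (1/2:ℝ))).toReal = 1 - q := by
    have hc : (Set.Iio (1/2:ℝ)) = Oᶜ := by rw [hOdef, Set.compl_Ici]
    rw [hc, measure_compl hOm (measure_ne_top _ _), measure_univ,
      ENNReal.toReal_sub_of_le prob_le_one ENNReal.one_ne_top]
    simp [hq_def]
  have hr1 : (1 - q) / 4 ≤ ∫ x, (x - 1)^2 ∂(A (t 0)) := by
    rw [← h1q]
    refine risk_lower (hrange _) 1 (fun x hx => by nlinarith [hx.1, hx.2])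
      (Set.Iio (1/2:ℝ)) measurableSet_Iio ?_
    intro x hx
    have : x < (1:ℝ)/2 := hx
    nlinarith
  have hq1 : q ≤ 1 := by
    rw [hq_def]
    exact ENNReal.toReal_le_of_le_ofReal one_pos.le (by simpa using prob_le_one)
  rw [hb0, hb1]
  rcases le_or_gt (1/(2*(1+E))) p with hp | hp
  · refine le_trans ?_ (le_trans hr0 (le_max_left _ _))
    rw [div_le_div_iff₀ (by positivity) (by norm_num)]
    rw [div_le_iff₀ (by positivity)] at hp
    nlinarith
  · refine le_trans ?_ (le_trans hr1 (le_max_right _ _))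
    rw [div_le_div_iff₀ (by positivity) (by norm_num)]
    rw [lt_div_iff₀ (by positivity)] at hp
    have hp' : E * (p * (2 * (1 + E))) ≤ E * 1 :=
      mul_le_mul_of_nonneg_left hp.le hEpos.le
    have hq2 : q < E * p + 1/2 := by linarith
    have h3 : q * (8 * (1 + E)) < (E * p + 1/2) * (8 * (1 + E)) :=
      mul_lt_mul_of_pos_right hq2 (by positivity)
    linarith only [h3, hp']
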